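/- Let n ≥ 2. Then the cardinality of B equals n! times the Lebesgue measure of Δ, i.e. |B| = n!·Vol(Δ). -/

import Mathlib

/-!
`Δ` contains `0` in its interior and is triangulated by the `n + 1` simplices with apex `0` over
its remaining facets: the simplex on `a₁e₁, …, aₙeₙ` and, for each `k`, the one in which `aₖeₖ`
is replaced by `γ`. Their volumes times `n!` are the absolute determinants `∏ aᵢ` and
`dₖ ∏_{j ≠ k} aⱼ`; the factor `n!` is the inverse volume of the standard simplex, since the `n!`
order simplices `{x_{σ 1} ≤ ⋯ ≤ x_{σ n}}` tile the unit cube.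

`B` splits in the same way. With `wᵢ = vᵢ / dᵢ`, the points with all `vᵢ > 0` form the box
`∏ [1, aᵢ]`; every other point is assigned the first index `k` at which `w` is minimal. For fixed
`k` and `vₖ`, each other coordinate `vⱼ` ranges over `aⱼ` consecutive integers, so a shift
depending only on `vₖ` maps this piece onto a box with `dₖ ∏_{j ≠ k} aⱼ` points.
-/

open Finset MeasureTheory

/-- The set `B` of lattice points `v ∈ ℤ^n` with `-dᵢ < vᵢ ≤ aᵢ` for all `i`, and
for all `i < j`, `dⱼ(vᵢ - aᵢ) ≤ dᵢ vⱼ` and `dᵢ vⱼ < dⱼ vᵢ + dᵢ aⱼ`. -/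
def setB (n : ℕ) (a d : Fin n → ℤ) : Set (Fin n → ℤ) :=
  {v | (∀ i, -d i < v i ∧ v i ≤ a i) ∧
    ∀ i j : Fin n, i < j →
      d j * (v i - a i) ≤ d i * v j ∧ d i * v j < d j * v i + d i * a j}

/-- `Δ` is the convex hull of `0`, the points `aᵢ·eᵢ`, and `γ = (-d₁,…,-dₙ)` in `ℝ^n`. -/
def Delta (n : ℕ) (a d : Fin n → ℤ) : Set (Fin n → ℝ) :=
  convexHull ℝ (({0, fun i => -(d i : ℝ)} : Set (Fin n → ℝ)) ∪
    Set.range (fun i : Fin n => fun j => if j = i then (a i : ℝ) else 0))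

open scoped Nat ENNReal Matrix

def cornerSimplex (ι : Type*) [Fintype ι] : Set (ι → ℝ) :=
  {c | (∀ i, 0 ≤ c i) ∧ ∑ i, c i ≤ 1}

def orderSimplex (n : ℕ) (σ : Equiv.Perm (Fin n)) : Set (Fin n → ℝ) :=
  Set.Icc 0 1 ∩ {x | Monotone (x ∘ σ)}

theorem isClosed_orderSimplex (n : ℕ) (σ : Equiv.Perm (Fin n)) : IsClosed (orderSimplex n σ) :=
  isClosed_Icc.inter (isClosed_monotone.preimage (f := fun x : Fin n → ℝ => x ∘ σ)
    (continuous_pi fun i => continuous_apply (σ i)))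

theorem volume_orderSimplex (n : ℕ) (σ : Equiv.Perm (Fin n)) :
    volume (orderSimplex n σ) = volume (orderSimplex n 1) := by
  have hcomp (x : Fin n → ℝ) : MeasurableEquiv.piCongrLeft (fun _ => ℝ) σ.symm x = x ∘ σ := by
    funext i
    simp [MeasurableEquiv.piCongrLeft, Equiv.piCongrLeft, Equiv.piCongrLeft']
  have hpre : MeasurableEquiv.piCongrLeft (fun _ => ℝ) σ.symm ⁻¹' orderSimplex n 1 =
      orderSimplex n σ := by
    ext x
    simp only [Set.mem_preimage, hcomp, orderSimplex, Set.mem_inter_iff, Set.mem_ofPred_eq,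
      Equiv.Perm.coe_one, Function.comp_id, Set.mem_Icc]
    refine and_congr_left fun _ => ⟨fun h => ⟨fun i => ?_, fun i => ?_⟩,
      fun h => ⟨fun i => h.1 (σ i), fun i => h.2 (σ i)⟩⟩
    · simpa using h.1 (σ.symm i)
    · simpa using h.2 (σ.symm i)
  rw [← hpre, (volume_measurePreserving_piCongrLeft _ σ.symm).measure_preimage
    (isClosed_orderSimplex n 1).measurableSet.nullMeasurableSet]

theorem volume_ker_eq_zero {ι : Type*} [Fintype ι] {f : (ι → ℝ) →ₗ[ℝ] ℝ} {y : ι → ℝ}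
    (hy : f y ≠ 0) : volume (LinearMap.ker f : Set (ι → ℝ)) = 0 :=
  Measure.addHaar_submodule _ _ fun htop => hy (htop ▸ Submodule.mem_top : y ∈ LinearMap.ker f)

theorem volume_setOf_not_injective (n : ℕ) :
    volume {x : Fin n → ℝ | ¬ Function.Injective x} = 0 := by
  let diff (i j : Fin n) : (Fin n → ℝ) →ₗ[ℝ] ℝ :=
    (LinearMap.proj i : (Fin n → ℝ) →ₗ[ℝ] ℝ) - LinearMap.proj j
  have hsub : {x : Fin n → ℝ | ¬ Function.Injective x} ⊆
      ⋃ (i : Fin n) (j : Fin n) (_ : i ≠ j), (LinearMap.ker (diff i j) : Set _) := by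
    intro x hx
    simp only [Function.Injective, not_forall] at hx
    obtain ⟨i, j, hxij, hij⟩ := hx
    simp only [Set.mem_iUnion]
    exact ⟨i, j, hij, by simp [diff, hxij]⟩
  exact measure_mono_null hsub (measure_iUnion_null fun i => measure_iUnion_null fun j =>
    measure_iUnion_null fun hij => volume_ker_eq_zero (y := Pi.single i 1) (by simp [diff, hij]))

theorem eq_of_monotone_comp {n : ℕ} {x : Fin n → ℝ} (hx : Function.Injective x)
    {σ τ : Equiv.Perm (Fin n)} (hσ : Monotone (x ∘ σ)) (hτ : Monotone (x ∘ τ)) : σ = τ := by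
  have hsort (ρ : Equiv.Perm (Fin n)) (hρ : Monotone (x ∘ ρ)) : ρ = Tuple.sort x :=
    Tuple.eq_sort_iff.2 ⟨hρ, fun i j hij hxij => absurd (ρ.injective (hx hxij)) hij.ne⟩
  rw [hsort σ hσ, hsort τ hτ]

theorem factorial_mul_volume_orderSimplex (n : ℕ) :
    (n ! : ℝ≥0∞) * volume (orderSimplex n 1) = 1 := by
  have hdisj : Pairwise (Function.onFun (AEDisjoint volume) (orderSimplex n)) :=
    fun σ τ hστ => measure_mono_null (fun x hx hinj => hστ
      (eq_of_monotone_comp hinj hx.1.2 hx.2.2)) (volume_setOf_not_injective n)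
  have hunion : ⋃ σ, orderSimplex n σ = Set.Icc 0 1 :=
    (Set.iUnion_subset fun σ => Set.inter_subset_left).antisymm
      fun x hx => Set.mem_iUnion.2 ⟨Tuple.sort x, hx, Tuple.monotone_sort x⟩
  have hsum := measure_iUnion₀ hdisj
    fun σ => (isClosed_orderSimplex n σ).measurableSet.nullMeasurableSet
  rw [hunion, Real.volume_Icc_pi, tsum_fintype] at hsum
  simpa [volume_orderSimplex, Fintype.card_perm] using hsum.symm

-- `x ↦ (x₀, x₁ - x₀, …, xₘ - xₘ₋₁)`
def diffMatrix (m : ℕ) : Matrix (Fin (m + 1)) (Fin (m + 1)) ℝ :=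
  fun i j => (if j = i then 1 else 0) - (if (j : ℕ) + 1 = i then 1 else 0)

theorem diffMatrix_mulVec_zero (m : ℕ) (x : Fin (m + 1) → ℝ) : (diffMatrix m *ᵥ x) 0 = x 0 := by
  simp [diffMatrix, Matrix.mulVec, dotProduct]

theorem diffMatrix_mulVec_succ (m : ℕ) (x : Fin (m + 1) → ℝ) (k : Fin m) :
    (diffMatrix m *ᵥ x) k.succ = x k.succ - x k.castSucc := by
  have hk (j : Fin (m + 1)) : (j : ℕ) = k ↔ j = k.castSucc := by
    simp [Fin.ext_iff]
  simp [diffMatrix, Matrix.mulVec, dotProduct, sub_mul, hk]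

theorem det_diffMatrix (m : ℕ) : (diffMatrix m).det = 1 := by
  have htri : (diffMatrix m).BlockTriangular OrderDual.toDual := fun i j (hij : i < j) => by
    simp [diffMatrix, hij.ne', show (j : ℕ) + 1 ≠ i by omega]
  simp [Matrix.det_of_isLowerTriangular _ htri, diffMatrix]

theorem sum_diffMatrix_mulVec (m : ℕ) (x : Fin (m + 1) → ℝ) :
    ∑ i, (diffMatrix m *ᵥ x) i = x (Fin.last m) := by
  rw [Fin.sum_univ_succ, diffMatrix_mulVec_zero]
  simp only [diffMatrix_mulVec_succ, sum_sub_distrib]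
  linarith [Fin.sum_univ_succ x, Fin.sum_univ_castSucc x]

theorem orderSimplex_eq_preimage (m : ℕ) :
    orderSimplex (m + 1) 1 = Matrix.toLin' (diffMatrix m) ⁻¹' cornerSimplex (Fin (m + 1)) := by
  ext x
  simp only [orderSimplex, cornerSimplex, Set.mem_inter_iff, Set.mem_preimage, Set.mem_ofPred_eq,
    Equiv.Perm.coe_one, Function.comp_id, Matrix.toLin'_apply, sum_diffMatrix_mulVec,
    Fin.forall_fin_succ, diffMatrix_mulVec_zero, diffMatrix_mulVec_succ, sub_nonneg,
    ← Fin.monotone_iff_le_succ]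
  constructor
  · rintro ⟨⟨h0, h1⟩, hx⟩
    exact ⟨⟨h0 0, hx⟩, h1 _⟩
  · rintro ⟨⟨h0, hx⟩, h1⟩
    exact ⟨⟨fun i => h0.trans (hx (Fin.zero_le i)), fun i => (hx (Fin.le_last i)).trans h1⟩, hx⟩

theorem factorial_mul_volume_cornerSimplex (n : ℕ) :
    (n ! : ℝ≥0∞) * volume (cornerSimplex (Fin n)) = 1 := by
  rw [← factorial_mul_volume_orderSimplex n]
  congr 1
  cases n with
  | zero =>
    have hmem {s : Set (Fin 0 → ℝ)} (h : (0 : Fin 0 → ℝ) ∈ s) : s = Set.univ :=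
      Subsingleton.eq_univ_of_nonempty ⟨0, h⟩
    rw [hmem (s := cornerSimplex _) (by simp [cornerSimplex]),
      hmem (s := orderSimplex 0 1) ⟨⟨le_rfl, zero_le_one⟩, monotone_const⟩]
  | succ m =>
    rw [orderSimplex_eq_preimage, Measure.addHaar_preimage_linearMap _ (by simp [det_diffMatrix])]
    simp [det_diffMatrix]

theorem convex_cornerSimplex (ι : Type*) [Fintype ι] : Convex ℝ (cornerSimplex ι) := by
  rintro x ⟨hx0, hx1⟩ y ⟨hy0, hy1⟩ s t hs ht hst
  refine ⟨fun i => add_nonneg (mul_nonneg hs (hx0 i)) (mul_nonneg ht (hy0 i)), ?_⟩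
  simp only [Pi.add_apply, Pi.smul_apply, smul_eq_mul, sum_add_distrib, ← mul_sum]
  nlinarith

theorem convexHull_insert_zero_range {ι E : Type*} [Fintype ι] [AddCommGroup E] [Module ℝ E]
    (v : ι → E) :
    convexHull ℝ (insert 0 (Set.range v)) = Fintype.linearCombination ℝ v '' cornerSimplex ι := by
  classical
  apply (convexHull_min _ ((convex_cornerSimplex ι).linear_image _)).antisymm
  · rintro _ ⟨c, ⟨hc0, hc1⟩, rfl⟩
    have hw : ∀ o ∈ (univ : Finset (Option ι)), 0 ≤ o.elim (1 - ∑ i, c i) c := by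
      rintro (_ | i) - <;> simp [hc0, hc1]
    have hmem := (convex_convexHull ℝ (insert 0 (Set.range v))).sum_mem hw
      (by simp [Fintype.sum_option])
      (z := fun o => o.elim 0 v) (by
        rintro (_ | i) -
        exacts [subset_convexHull ℝ _ (Set.mem_insert _ _),
          subset_convexHull ℝ _ (Set.mem_insert_of_mem _ ⟨i, rfl⟩)])
    simpa [Fintype.sum_option, Fintype.linearCombination_apply] using hmem
  · rintro _ (rfl | ⟨i, rfl⟩)
    · exact ⟨0, ⟨fun _ => le_rfl, by simp⟩, map_zero _⟩
    · exact ⟨Pi.single i 1, ⟨fun j => by simp [Pi.single_apply]; split_ifs <;> norm_num,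
        by simp⟩, by simp [Fintype.linearCombination_apply_single]⟩

theorem det_linearCombination {n : ℕ} (v : Fin n → Fin n → ℝ) :
    LinearMap.det (Fintype.linearCombination ℝ v) = (Matrix.of v).det := by
  have : LinearMap.toMatrix' (Fintype.linearCombination ℝ v) = (Matrix.of v)ᵀ := by
    ext i j
    simp [LinearMap.toMatrix'_apply, Fintype.linearCombination_apply_single]
  rw [← LinearMap.det_toMatrix', this, Matrix.det_transpose]

theorem factorial_mul_volume_convexHull_insert_zero {n : ℕ} (v : Fin n → Fin n → ℝ) :
    (n ! : ℝ≥0∞) * volume (convexHull ℝ (insert 0 (Set.range v))) =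
      ENNReal.ofReal |(Matrix.of v).det| := by
  rw [convexHull_insert_zero_range, Measure.addHaar_image_linearMap, det_linearCombination,
    mul_left_comm, factorial_mul_volume_cornerSimplex, mul_one]

theorem det_updateRow_diagonal {ι R : Type*} [Fintype ι] [DecidableEq ι] [CommRing R]
    (α r : ι → R) (k : ι) :
    ((Matrix.diagonal α).updateRow k r).det = r k * ∏ j ∈ univ.erase k, α j := by
  rw [← Matrix.det_transpose, ← Matrix.updateCol_transpose, Matrix.diagonal_transpose,
    ← Matrix.cramer_apply, Matrix.cramer_eq_adjugate_mulVec, Matrix.adjugate_diagonal,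
    Matrix.mulVec_diagonal, mul_comm]

section Triangulation

variable {n : ℕ} (α δ : Fin n → ℝ)

def simplexVertices : Option (Fin n) → Fin n → Fin n → ℝ
  | none => fun i => Pi.single i (α i)
  | some k => Function.update (fun i => Pi.single i (α i)) k (-δ)

def triangulationSimplex (o : Option (Fin n)) : Set (Fin n → ℝ) :=
  convexHull ℝ (insert 0 (Set.range (simplexVertices α δ o)))

theorem linearCombination_simplexVertices_none (c : Fin n → ℝ) (j : Fin n) :
    Fintype.linearCombination ℝ (simplexVertices α δ none) c j = c j * α j := by
  simp [simplexVertices, Fintype.linearCombination_apply, Pi.single_apply]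

theorem linearCombination_simplexVertices_some (k : Fin n) (c : Fin n → ℝ) (j : Fin n) :
    Fintype.linearCombination ℝ (simplexVertices α δ (some k)) c j =
      (if j = k then 0 else c j * α j) - c k * δ j := by
  rw [Fintype.linearCombination_apply, Finset.sum_apply, ← add_sum_erase _ _ (mem_univ k)]
  have hsum : ∑ i ∈ univ.erase k, (c i • simplexVertices α δ (some k) i) j =
      if j = k then 0 else c j * α j := by
    rw [Finset.sum_congr rfl fun i hi => by
      rw [simplexVertices, Function.update_of_ne (ne_of_mem_erase hi)]]
    simp [Pi.single_apply, eq_comm (a := j)]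
  rw [hsum]
  simp only [simplexVertices, Function.update_self, Pi.smul_apply, Pi.neg_apply, smul_eq_mul]
  ring

theorem det_simplexVertices_none : (Matrix.of (simplexVertices α δ none)).det = ∏ i, α i := by
  have : Matrix.of (simplexVertices α δ none) = Matrix.diagonal α := by
    ext i j
    simp [simplexVertices, Matrix.diagonal_apply, Pi.single_apply, eq_comm]
  rw [this, Matrix.det_diagonal]

theorem det_simplexVertices_some (k : Fin n) :
    (Matrix.of (simplexVertices α δ (some k))).det = -δ k * ∏ j ∈ univ.erase k, α j := by
  have : Matrix.of (simplexVertices α δ (some k)) = (Matrix.diagonal α).updateRow k (-δ) := by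
    ext i j
    by_cases hik : i = k <;>
      simp [simplexVertices, Matrix.updateRow_apply, hik, Matrix.diagonal_apply, Pi.single_apply,
        eq_comm]
  rw [this, det_updateRow_diagonal, Pi.neg_apply]

def deltaVertices : Option (Fin n) → Fin n → ℝ
  | none => -δ
  | some i => Pi.single i (α i)

theorem triangulationSimplex_subset (o : Option (Fin n)) :
    triangulationSimplex α δ o ⊆ convexHull ℝ (insert 0 (Set.range (deltaVertices α δ))) := by
  refine convexHull_mono (Set.insert_subset_insert ?_)
  rintro _ ⟨i, rfl⟩
  cases o with
  | none => exact ⟨some i, rfl⟩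
  | some k =>
    by_cases hik : i = k
    · exact ⟨none, by simp [simplexVertices, hik, deltaVertices]⟩
    · exact ⟨some i, by simp [simplexVertices, hik, deltaVertices]⟩

theorem mem_triangulationSimplex_none {f : Fin n → ℝ} (hf : ∀ j, 0 ≤ f j) (hsum : ∑ j, f j ≤ 1) :
    (fun j => f j * α j) ∈ triangulationSimplex α δ none := by
  rw [triangulationSimplex, convexHull_insert_zero_range]
  exact ⟨f, ⟨hf, hsum⟩, funext (linearCombination_simplexVertices_none α δ f)⟩

theorem mem_triangulationSimplex_some {k : Fin n} {f : Fin n → ℝ} {s : ℝ} (hf : ∀ j, 0 ≤ f j)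
    (hfk : f k = 0) (hs : 0 ≤ s) (hsum : ∑ j, f j + s ≤ 1) :
    (fun j => f j * α j - s * δ j) ∈ triangulationSimplex α δ (some k) := by
  rw [triangulationSimplex, convexHull_insert_zero_range]
  refine ⟨Function.update f k s, ⟨fun j => ?_, ?_⟩, funext fun j => ?_⟩
  · rcases eq_or_ne j k with rfl | hjk
    · simpa using hs
    · simpa [hjk] using hf j
  · rwa [sum_update_of_mem (mem_univ k), sdiff_singleton_eq_erase, sum_erase _ hfk, add_comm]
  · rw [linearCombination_simplexVertices_some]
    rcases eq_or_ne j k with rfl | hjk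
    · simp [hfk]
    · simp [hjk]

theorem nonneg_of_mem_triangulationSimplex_none (hα : ∀ i, 0 < α i) {x : Fin n → ℝ}
    (hx : x ∈ triangulationSimplex α δ none) (j : Fin n) : 0 ≤ x j := by
  rw [triangulationSimplex, convexHull_insert_zero_range] at hx
  obtain ⟨c, ⟨hc, -⟩, rfl⟩ := hx
  rw [linearCombination_simplexVertices_none]
  exact mul_nonneg (hc j) (hα j).le

theorem le_of_mem_triangulationSimplex_some (hα : ∀ i, 0 < α i) (hδ : ∀ i, 0 < δ i) {k : Fin n}
    {x : Fin n → ℝ} (hx : x ∈ triangulationSimplex α δ (some k)) :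
    x k ≤ 0 ∧ ∀ j, δ j * x k ≤ δ k * x j := by
  rw [triangulationSimplex, convexHull_insert_zero_range] at hx
  obtain ⟨c, ⟨hc, -⟩, rfl⟩ := hx
  simp only [linearCombination_simplexVertices_some, ↓reduceIte, zero_sub]
  refine ⟨neg_nonpos.2 (mul_nonneg (hc k) (hδ k).le), fun j => ?_⟩
  have : 0 ≤ if j = k then 0 else c j * α j := by
    split_ifs
    exacts [le_rfl, mul_nonneg (hc j) (hα j).le]
  nlinarith [hδ k]

theorem mem_iUnion_triangulationSimplex (hα : ∀ i, 0 < α i) (hδ : ∀ i, 0 < δ i)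
    {lam : Fin n → ℝ} {μ : ℝ} (hlam : ∀ j, 0 ≤ lam j) (hμ : 0 ≤ μ) (hsum : ∑ j, lam j + μ ≤ 1) :
    (fun j => lam j * α j - μ * δ j) ∈ ⋃ o, triangulationSimplex α δ o := by
  set x : Fin n → ℝ := fun j => lam j * α j - μ * δ j
  have hshift {s : ℝ} (hsμ : s ≤ μ) (j : Fin n) : (x j + s * δ j) / α j ≤ lam j := by
    rw [div_le_iff₀ (hα j)]
    nlinarith [hδ j]
  have hsum_le {s : ℝ} (hsμ : s ≤ μ) : ∑ j, (x j + s * δ j) / α j + s ≤ 1 := by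
    linarith [sum_le_sum fun j (_ : j ∈ univ) => hshift hsμ j]
  by_cases hpos : ∀ j, 0 ≤ x j
  · refine Set.mem_iUnion.2 ⟨none, ?_⟩
    convert mem_triangulationSimplex_none α δ (f := fun j => x j / α j)
      (fun j => div_nonneg (hpos j) (hα j).le) (by simpa using hsum_le hμ) using 2
    rw [div_mul_cancel₀ _ (hα _).ne']
  -- Otherwise `x ∈ triangulationSimplex α δ (some k)` for `k` minimising `x j / δ j`, and the
  -- weight of `-δ` is `s = -x k / δ k ≤ μ`.
  push Not at hpos
  obtain ⟨i, hi⟩ := hpos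
  obtain ⟨k, -, hk⟩ := exists_min_image univ (fun j => x j / δ j) ⟨i, mem_univ i⟩
  have hmin (j : Fin n) : x k / δ k ≤ x j / δ j := hk j (mem_univ j)
  set s := -(x k / δ k)
  have hxk : x k + s * δ k = 0 := by
    rw [neg_mul, div_mul_cancel₀ _ (hδ k).ne', add_neg_cancel]
  have hs : 0 ≤ s := neg_nonneg.2 ((hmin i).trans (div_neg_of_neg_of_pos hi (hδ i)).le)
  have hsμ : s ≤ μ := by
    have := mul_nonneg (hlam k) (hα k).le
    simp only [s, x, neg_le, le_div_iff₀ (hδ k)]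
    linarith
  have hf (j : Fin n) : 0 ≤ (x j + s * δ j) / α j := by
    refine div_nonneg ?_ (hα j).le
    have := (div_le_div_iff₀ (hδ k) (hδ j)).1 (hmin j)
    simp only [s, neg_mul, div_mul_eq_mul_div]
    rw [← sub_eq_add_neg, sub_nonneg, div_le_iff₀ (hδ k)]
    linarith
  refine Set.mem_iUnion.2 ⟨some k, ?_⟩
  convert mem_triangulationSimplex_some α δ hf (by rw [hxk, zero_div]) hs (hsum_le hsμ)
    using 2 with j
  field_simp [(hα j).ne']
  ring

theorem linearCombination_deltaVertices (c : Option (Fin n) → ℝ) (j : Fin n) :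
    Fintype.linearCombination ℝ (deltaVertices α δ) c j = c (some j) * α j - c none * δ j := by
  simp [Fintype.linearCombination_apply, Fintype.sum_option, deltaVertices, Pi.single_apply]
  ring

theorem convexHull_deltaVertices_subset (hα : ∀ i, 0 < α i) (hδ : ∀ i, 0 < δ i) :
    convexHull ℝ (insert 0 (Set.range (deltaVertices α δ))) ⊆ ⋃ o, triangulationSimplex α δ o := by
  rw [convexHull_insert_zero_range]
  rintro _ ⟨c, ⟨hc0, hc1⟩, rfl⟩
  have hx : Fintype.linearCombination ℝ (deltaVertices α δ) c =
      fun j => c (some j) * α j - c none * δ j := funext (linearCombination_deltaVertices α δ c)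
  rw [hx]
  exact mem_iUnion_triangulationSimplex α δ hα hδ (fun j => hc0 _) (hc0 none)
    (by simpa [Fintype.sum_option, add_comm] using hc1)

theorem aedisjoint_triangulationSimplex (hα : ∀ i, 0 < α i) (hδ : ∀ i, 0 < δ i) :
    Pairwise (Function.onFun (AEDisjoint volume) (triangulationSimplex α δ)) := by
  have none_some (k : Fin n) :
      AEDisjoint volume (triangulationSimplex α δ none) (triangulationSimplex α δ (some k)) := by
    refine measure_mono_null (fun x ⟨hx, hx'⟩ => ?_)
      (volume_ker_eq_zero (f := LinearMap.proj k) (y := Pi.single k 1) (by simp))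
    exact le_antisymm (le_of_mem_triangulationSimplex_some α δ hα hδ hx').1
      (nonneg_of_mem_triangulationSimplex_none α δ hα hx k)
  rintro (_ | k) (_ | l) hne
  · exact absurd rfl hne
  · exact none_some l
  · exact (none_some k).symm
  · have hkl : k ≠ l := fun h => hne (congrArg some h)
    let f : (Fin n → ℝ) →ₗ[ℝ] ℝ := δ k • LinearMap.proj l - δ l • LinearMap.proj k
    refine measure_mono_null (fun x ⟨hx, hx'⟩ => ?_)
      (volume_ker_eq_zero (f := f) (y := Pi.single l 1) (by simp [f, hkl, (hδ k).ne']))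
    have h1 := (le_of_mem_triangulationSimplex_some α δ hα hδ hx).2 l
    have h2 := (le_of_mem_triangulationSimplex_some α δ hα hδ hx').2 k
    simp only [SetLike.mem_coe, LinearMap.mem_ker, f, LinearMap.sub_apply, LinearMap.smul_apply,
      LinearMap.proj_apply, smul_eq_mul]
    linarith

theorem factorial_mul_volume_convexHull_deltaVertices (hα : ∀ i, 0 < α i) (hδ : ∀ i, 0 < δ i) :
    (n ! : ℝ≥0∞) * volume (convexHull ℝ (insert 0 (Set.range (deltaVertices α δ)))) =
      ENNReal.ofReal (∏ i, α i + ∑ k, δ k * ∏ j ∈ univ.erase k, α j) := by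
  have hunion : convexHull ℝ (insert 0 (Set.range (deltaVertices α δ))) =
      ⋃ o, triangulationSimplex α δ o :=
    (convexHull_deltaVertices_subset α δ hα hδ).antisymm
      (Set.iUnion_subset (triangulationSimplex_subset α δ))
  have hprod (s : Finset (Fin n)) : 0 ≤ ∏ j ∈ s, α j := prod_nonneg fun j _ => (hα j).le
  rw [hunion, measure_iUnion₀ (aedisjoint_triangulationSimplex α δ hα hδ) fun o =>
      (((Set.finite_range _).insert 0).isCompact_convexHull ℝ).measurableSet.nullMeasurableSet,
    tsum_fintype, Fintype.sum_option, mul_add, mul_sum]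
  simp only [triangulationSimplex, factorial_mul_volume_convexHull_insert_zero,
    det_simplexVertices_none, det_simplexVertices_some, abs_mul, abs_neg,
    abs_of_pos (hδ _), abs_of_nonneg (hprod _)]
  rw [ENNReal.ofReal_add (hprod _) (sum_nonneg fun k _ => mul_nonneg (hδ k).le (hprod _)),
    ENNReal.ofReal_sum_of_nonneg fun k _ => mul_nonneg (hδ k).le (hprod _)]

end Triangulation

theorem Delta_eq_convexHull (n : ℕ) (a d : Fin n → ℤ) :
    Delta n a d = convexHull ℝ (insert 0 (Set.range
      (deltaVertices (fun i => (a i : ℝ)) (fun i => (d i : ℝ))))) := by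
  rw [Delta, Option.range_eq, Set.insert_union, Set.singleton_union]
  congr 4
  ext i j
  simp [deltaVertices, Pi.single_apply]

section RatioConditions

variable {ι K : Type*} [LinearOrder ι] [Field K] [LinearOrder K]

/- In the coordinates `w i = v i / d i` and `α i = a i / d i`, the conditions defining `B` become
`InB α w`; `InBk α w k` picks out the points of `B` at which `w` is nonpositive and first minimal
at `k`, the lattice counterpart of `triangulationSimplex α δ (some k)`. -/
def InB (α w : ι → K) : Prop :=
  (∀ i, -1 < w i ∧ w i ≤ α i) ∧ ∀ i j, i < j → w i - α i ≤ w j ∧ w j < w i + α j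

def InBk (α w : ι → K) (k : ι) : Prop :=
  (-1 < w k ∧ w k ≤ 0) ∧ (∀ j < k, w k < w j ∧ w j ≤ w k + α j) ∧
    ∀ j, k < j → w k ≤ w j ∧ w j < w k + α j

variable {α w : ι → K}

theorem inB_of_pos [IsStrictOrderedRing K] (hw : ∀ i, 0 < w i ∧ w i ≤ α i) : InB α w :=
  ⟨fun i => ⟨by linarith [hw i], (hw i).2⟩, fun i j _ => by
    constructor <;> linarith [hw i, hw j]⟩

theorem InBk.inB [IsStrictOrderedRing K] (hα : ∀ i, 0 < α i) {k : ι} (h : InBk α w k) :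
    InB α w := by
  obtain ⟨⟨hk1, hk0⟩, hlt, hgt⟩ := h
  have hle (j : ι) : w k ≤ w j ∧ w j ≤ w k + α j := by
    rcases lt_trichotomy j k with hj | rfl | hj
    · exact ⟨(hlt j hj).1.le, (hlt j hj).2⟩
    · exact ⟨le_rfl, by linarith [hα j]⟩
    · exact ⟨(hgt j hj).1, (hgt j hj).2.le⟩
  refine ⟨fun i => ⟨by linarith [hle i], by linarith [hle i]⟩, fun i j hij => ⟨?_, ?_⟩⟩
  · linarith [hle i, hle j]
  · rcases lt_or_ge k j with hkj | hjk
    · linarith [(hgt j hkj).2, hle i]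
    · linarith [(hlt i (hij.trans_le hjk)).1, hle j]

theorem InB.exists_inBk [IsStrictOrderedRing K] [Fintype ι] (h : InB α w) (hw : ∃ i, w i ≤ 0) :
    ∃ k, InBk α w k := by
  obtain ⟨i, hi⟩ := hw
  obtain ⟨k, -, hk⟩ := exists_min_image univ (fun j => toLex (w j, j)) ⟨i, mem_univ i⟩
  have hmin (j : ι) : w k < w j ∨ w k = w j ∧ k ≤ j := Prod.Lex.toLex_le_toLex.1 (hk j (mem_univ j))
  have hle (j : ι) : w k ≤ w j := (hmin j).elim le_of_lt fun h => h.1.le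
  refine ⟨k, ⟨(h.1 k).1, (hle i).trans hi⟩, fun j hjk => ⟨?_, ?_⟩, fun j hkj => ⟨hle j, ?_⟩⟩
  · exact (hmin j).resolve_right fun h' => hjk.not_ge h'.2
  · linarith [(h.2 j k hjk).1]
  · exact (h.2 k j hkj).2

theorem InBk.eq {k l : ι} (hk : InBk α w k) (hl : InBk α w l) : k = l := by
  by_contra hne
  rcases lt_or_gt_of_ne hne with hkl | hlk
  · exact (hk.2.2 l hkl).1.not_gt (hl.2.1 k hkl).1
  · exact (hl.2.2 k hlk).1.not_gt (hk.2.1 l hlk).1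

theorem inB_iff [IsStrictOrderedRing K] [Fintype ι] (hα : ∀ i, 0 < α i) :
    InB α w ↔ (∀ i, 0 < w i ∧ w i ≤ α i) ∨ ∃ k, InBk α w k := by
  refine ⟨fun h => ?_, fun h => h.elim inB_of_pos fun ⟨k, hk⟩ => hk.inB hα⟩
  by_cases hw : ∃ i, w i ≤ 0
  · exact Or.inr (h.exists_inBk hw)
  · push Not at hw
    exact Or.inl fun i => ⟨hw i, (h.1 i).2⟩

end RatioConditions

theorem lt_and_le_add_iff_floor {R : Type*} [Ring R] [LinearOrder R] [IsStrictOrderedRing R]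
    [FloorRing R] (x : R) (z m : ℤ) : x < z ∧ (z : R) ≤ x + m ↔ ⌊x⌋ < z ∧ z ≤ ⌊x⌋ + m := by
  rw [Int.floor_lt, ← Int.floor_add_intCast, Int.le_floor]

theorem le_and_lt_add_iff_ceil {R : Type*} [Ring R] [LinearOrder R] [IsStrictOrderedRing R]
    [FloorRing R] (x : R) (z m : ℤ) : x ≤ z ∧ (z : R) < x + m ↔ ⌈x⌉ ≤ z ∧ z < ⌈x⌉ + m := by
  rw [Int.ceil_le, ← Int.ceil_add_intCast, Int.lt_ceil]

theorem forall_iff_lt_eq_gt {ι : Type*} [LinearOrder ι] (k : ι) {P : ι → Prop} :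
    (∀ j, P j) ↔ P k ∧ (∀ j < k, P j) ∧ ∀ j, k < j → P j :=
  ⟨fun h => ⟨h k, fun j _ => h j, fun j _ => h j⟩, fun ⟨hk, hlt, hgt⟩ j =>
    (lt_trichotomy j k).elim (hlt j) fun h => h.elim (· ▸ hk) (hgt j)⟩

theorem ncard_Icc_pi {ι : Type*} [Fintype ι] [DecidableEq ι] {lo hi : ι → ℤ} (h : lo ≤ hi + 1) :
    ((Set.Icc lo hi).ncard : ℤ) = ∏ i, (hi i + 1 - lo i) := by
  rw [← Finset.coe_Icc, Set.ncard_coe_finset, Pi.card_Icc, Nat.cast_prod]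
  exact prod_congr rfl fun i _ => Int.card_Icc_of_le _ _ (h i)

section LatticePoints

variable {n : ℕ} {a d : Fin n → ℤ}

def ratios (d v : Fin n → ℤ) : Fin n → ℚ := fun i => (v i : ℚ) / d i

theorem mem_setB_iff (hd : ∀ i, 0 < d i) {v : Fin n → ℤ} :
    v ∈ setB n a d ↔ InB (ratios d a) (ratios d v) := by
  have hdq (i : Fin n) : (0 : ℚ) < d i := by exact_mod_cast hd i
  have hle (i j : Fin n) (p q : ℤ) : (p : ℚ) / d i ≤ q / d j ↔ d j * p ≤ d i * q := by
    rw [div_le_div_iff₀ (hdq i) (hdq j), mul_comm, mul_comm (q : ℚ)]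
    exact_mod_cast Iff.rfl
  have hlt (i j : Fin n) (p q : ℤ) : (p : ℚ) / d i < q / d j ↔ d j * p < d i * q := by
    rw [div_lt_div_iff₀ (hdq i) (hdq j), mul_comm, mul_comm (q : ℚ)]
    exact_mod_cast Iff.rfl
  simp only [setB, Set.mem_ofPred_eq, InB, ratios]
  refine and_congr (forall_congr' fun i => and_congr ?_ ?_)
    (forall_congr' fun i => forall_congr' fun j => imp_congr_right fun _ => and_congr ?_ ?_)
  · rw [lt_div_iff₀ (hdq i), neg_one_mul]
    exact_mod_cast Iff.rfl
  · rw [div_le_div_iff_of_pos_right (hdq i)]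
    exact_mod_cast Iff.rfl
  · rw [← sub_div, ← Int.cast_sub, hle]
  · conv_rhs => rw [← sub_lt_iff_lt_add, ← sub_div, ← Int.cast_sub, hlt, mul_sub]
    constructor <;> intro <;> linarith

def bPiece (a d : Fin n → ℤ) : Option (Fin n) → Set (Fin n → ℤ)
  | none => Set.Icc 1 a
  | some k => {v | InBk (ratios d a) (ratios d v) k}

theorem setB_eq_iUnion_bPiece (ha : ∀ i, 0 < a i) (hd : ∀ i, 0 < d i) :
    setB n a d = ⋃ o, bPiece a d o := by
  have hdq (i : Fin n) : (0 : ℚ) < d i := by exact_mod_cast hd i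
  have hα (i : Fin n) : 0 < ratios d a i := div_pos (by exact_mod_cast ha i) (hdq i)
  ext v
  rw [mem_setB_iff hd, inB_iff hα, Set.mem_iUnion, Option.exists]
  refine or_congr ?_ Iff.rfl
  simp only [bPiece, Set.mem_Icc, Pi.le_def, ← forall_and, Pi.one_apply, ratios,
    div_pos_iff_of_pos_right (hdq _), div_le_div_iff_of_pos_right (hdq _)]
  exact forall_congr' fun i => and_congr (by norm_cast) (by norm_cast)

theorem pairwise_disjoint_bPiece (hd : ∀ i, 0 < d i) :
    Pairwise (Function.onFun Disjoint (bPiece a d)) := by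
  rintro (_ | k) (_ | l) hne
  · exact absurd rfl hne
  · refine Set.disjoint_left.2 fun v hv hv' => (hv'.1.2).not_gt ?_
    exact div_pos (by exact_mod_cast hv.1 l) (by exact_mod_cast hd l)
  · refine Set.disjoint_right.2 fun v hv hv' => (hv'.1.2).not_gt ?_
    exact div_pos (by exact_mod_cast hv.1 k) (by exact_mod_cast hd k)
  · exact Set.disjoint_left.2 fun v hv hv' => hne (congrArg some (InBk.eq hv hv'))

/- For `t = v k`, the conditions of `InBk` confine each `v j`, `j ≠ k`, to a half-open interval
of length `a j` starting at `d j * t / d k`; subtracting `bOffset d k t j` moves it onto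
`[0, a j - 1]`. -/
def bOffset (d : Fin n → ℤ) (k : Fin n) (t : ℤ) (j : Fin n) : ℤ :=
  if j = k then 0 else if j < k then ⌊(d j : ℚ) * (t / d k)⌋ + 1 else ⌈(d j : ℚ) * (t / d k)⌉

def bBox (a d : Fin n → ℤ) (k : Fin n) : Set (Fin n → ℤ) :=
  Set.Icc (Function.update 0 k (1 - d k)) (Function.update (a - 1) k 0)

theorem mem_bPiece_some_iff (hd : ∀ i, 0 < d i) {k : Fin n} {v : Fin n → ℤ} :
    v ∈ bPiece a d (some k) ↔ v - bOffset d k (v k) ∈ bBox a d k := by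
  have hdq (i : Fin n) : (0 : ℚ) < d i := by exact_mod_cast hd i
  have hscale (j : Fin n) (y : ℚ) (p : ℤ) : (d j : ℚ) * y + p = d j * (y + p / d j) := by
    rw [mul_add, mul_div_cancel₀ _ (hdq j).ne']
  simp only [bBox, Set.mem_Icc, Pi.le_def, ← forall_and]
  rw [forall_iff_lt_eq_gt k]
  simp only [bPiece, InBk, Set.mem_ofPred_eq, ratios, Pi.sub_apply, bOffset, Function.update_self]
  refine and_congr ?_ (and_congr (forall₂_congr fun j hj => ?_) (forall₂_congr fun j hj => ?_))
  · rw [lt_div_iff₀ (hdq k), div_le_iff₀ (hdq k), zero_mul, neg_one_mul, if_true, sub_zero]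
    norm_cast
    omega
  · rw [lt_div_iff₀' (hdq j), div_le_iff₀' (hdq j), ← hscale, lt_and_le_add_iff_floor]
    simp only [hj.ne, hj, ↓reduceIte, Function.update_of_ne hj.ne, Pi.zero_apply, Pi.sub_apply,
      Pi.one_apply]
    omega
  · rw [le_div_iff₀' (hdq j), div_lt_iff₀' (hdq j), ← hscale, le_and_lt_add_iff_ceil]
    simp only [hj.ne', hj.not_gt, ↓reduceIte, Function.update_of_ne hj.ne', Pi.zero_apply,
      Pi.sub_apply, Pi.one_apply]
    omega

theorem bPiece_some_eq_image (hd : ∀ i, 0 < d i) (k : Fin n) :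
    bPiece a d (some k) = (fun u => u + bOffset d k (u k)) '' bBox a d k := by
  have hoff (t : ℤ) : bOffset d k t k = 0 := if_pos rfl
  ext v
  rw [mem_bPiece_some_iff hd]
  refine ⟨fun h => ⟨_, h, by simp [hoff]⟩, ?_⟩
  rintro ⟨u, hu, rfl⟩
  simpa [hoff] using hu

theorem ncard_bPiece_some (ha : ∀ i, 0 < a i) (hd : ∀ i, 0 < d i) (k : Fin n) :
    ((bPiece a d (some k)).ncard : ℤ) = d k * ∏ j ∈ univ.erase k, a j := by
  have hoff (t : ℤ) : bOffset d k t k = 0 := if_pos rfl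
  have hinj : Function.Injective fun u : Fin n → ℤ => u + bOffset d k (u k) := fun u u' h => by
    have hk : u k = u' k := by simpa [hoff] using congrFun h k
    simpa [hk] using h
  have hbox : Function.update (0 : Fin n → ℤ) k (1 - d k) ≤ Function.update (a - 1) k 0 + 1 :=
    fun j => by
      rcases eq_or_ne j k with rfl | hjk
      · simpa using (hd j).le
      · simpa [hjk] using (ha j).le
  rw [bPiece_some_eq_image hd, Set.ncard_image_of_injective _ hinj, bBox, ncard_Icc_pi hbox,
    ← mul_prod_erase _ _ (mem_univ k)]
  simp only [Function.update_self, zero_add, sub_sub_cancel]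
  congr 1
  refine prod_congr rfl fun j hj => ?_
  simp [Function.update_of_ne (ne_of_mem_erase hj)]

theorem ncard_bPiece_none (ha : ∀ i, 0 < a i) : ((bPiece a d none).ncard : ℤ) = ∏ i, a i := by
  rw [bPiece, ncard_Icc_pi fun i => by simpa using (ha i).le]
  simp

theorem ncard_setB (ha : ∀ i, 0 < a i) (hd : ∀ i, 0 < d i) :
    ((setB n a d).ncard : ℤ) = ∏ i, a i + ∑ k, d k * ∏ j ∈ univ.erase k, a j := by
  have hfin : ∀ o, (bPiece a d o).Finite
    | none => Set.finite_Icc _ _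
    | some k => bPiece_some_eq_image hd k ▸ (Set.finite_Icc _ _).image _
  rw [setB_eq_iUnion_bPiece ha hd, Set.ncard_iUnion_of_finite hfin (pairwise_disjoint_bPiece hd),
    finsum_eq_sum_of_fintype, Nat.cast_sum, Fintype.sum_option, ncard_bPiece_none ha]
  simp only [ncard_bPiece_some ha hd]

end LatticePoints

theorem stmt2_general (n : ℕ) (a d : Fin n → ℤ)
    (ha : ∀ i, 0 < a i) (hd : ∀ i, 0 < d i) :
    ((setB n a d).ncard : ENNReal) = (Nat.factorial n : ENNReal) * volume (Delta n a d) := by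
  have hcount : ((setB n a d).ncard : ℝ) =
      ∏ i, (a i : ℝ) + ∑ k, (d k : ℝ) * ∏ j ∈ univ.erase k, (a j : ℝ) := by
    exact_mod_cast ncard_setB ha hd
  rw [Delta_eq_convexHull, factorial_mul_volume_convexHull_deltaVertices _ _
    (fun i => by exact_mod_cast ha i) (fun i => by exact_mod_cast hd i), ← hcount,
    ENNReal.ofReal_natCast]

theorem stmt2 (n : ℕ) (hn : 2 ≤ n) (a d : Fin n → ℤ)
    (ha : ∀ i, 0 < a i) (hd : ∀ i, 0 < d i) :
    ((setB n a d).ncard : ENNReal) = (Nat.factorial n : ENNReal) * volume (Delta n a d) :=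
  stmt2_general n a d ha hd
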